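/- Let U ⊆ ℝⁿ be open, g : U → Matrix (Fin n) (Fin n) ℝ smooth with g(x) symmetric and invertible for every x ∈ U, and ω : U → ℝⁿ smooth; let ḡ be the stationary Lorentzian metric matrix on ℝ × U with Christoffel symbols Γ̄^μ_{αβ}. Let I ⊆ ℝ be an open interval and x : I → U a twice differentiable unit-speed magnetic geodesic, i.e. Σ_{i,j} g_{ij}(x(s)) ẋⁱ ẋʲ = 1 and ẍⁱ + Σ_{j,k} Γⁱⱼₖ(x) ẋʲ ẋᵏ = Σ_j Fⁱⱼ(x) ẋʲ on I. Let t : I → ℝ be differentiable with ṫ(s) = 1 − Σᵢ ωᵢ(x(s)) ẋⁱ(s), and set γ(s) = (t(s), x(s)) ∈ ℝ^{1+n}. Then γ is a null geodesic of ḡ: for every μ ∈ {0,1,…,n}, γ̈^μ + Σ_{α,β} Γ̄^μ_{αβ}(x) γ̇^α γ̇^β = 0 on I, and Σ_{μ,ν} ḡ_{μν}(x(s)) γ̇^μ(s) γ̇^ν(s) = 0 for all s ∈ I. -/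

import Mathlib

open scoped BigOperators

/-- Partial derivative `∂ᵢ f (x)` of a function `f : ℝⁿ → ℝ`. -/
noncomputable def pd {n : ℕ} (f : (Fin n → ℝ) → ℝ) (i : Fin n) (x : Fin n → ℝ) : ℝ :=
  fderiv ℝ f x (Pi.single i 1)

/-- Christoffel symbols `Γⁱⱼₖ(x)` of the metric `g`. -/
noncomputable def Christoffel {n : ℕ} (g : (Fin n → ℝ) → Matrix (Fin n) (Fin n) ℝ)
    (x : Fin n → ℝ) (i j k : Fin n) : ℝ :=
  (1 / 2) * ∑ l, (g x)⁻¹ i l *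
    (pd (fun y => g y l k) j x + pd (fun y => g y l j) k x - pd (fun y => g y j k) l x)

/-- Magnetic field `(dω)ᵢⱼ = ∂ᵢωⱼ - ∂ⱼωᵢ`. -/
noncomputable def dOmega {n : ℕ} (ω : (Fin n → ℝ) → Fin n → ℝ)
    (x : Fin n → ℝ) (i j : Fin n) : ℝ :=
  pd (fun y => ω y j) i x - pd (fun y => ω y i) j x

/-- Lorentz force `Fⁱⱼ(x) = -Σ_l (g⁻¹)^{il} (dω)_{lj}(x)`. -/
noncomputable def LorentzF {n : ℕ} (g : (Fin n → ℝ) → Matrix (Fin n) (Fin n) ℝ)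
    (ω : (Fin n → ℝ) → Fin n → ℝ) (x : Fin n → ℝ) (i j : Fin n) : ℝ :=
  -∑ l, (g x)⁻¹ i l * dOmega ω x l j

/-- Coordinate matrix of the stationary Lorentzian metric `-(dt + ωᵢdxⁱ)² + gᵢⱼdxⁱdxʲ` on
`ℝ × U`, with index `0` the time coordinate: `ḡ₀₀ = -1`, `ḡ₀ᵢ = ḡᵢ₀ = -ωᵢ`,
`ḡᵢⱼ = gᵢⱼ - ωᵢωⱼ`. It is independent of the time coordinate. -/
noncomputable def gbar {n : ℕ} (g : (Fin n → ℝ) → Matrix (Fin n) (Fin n) ℝ)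
    (ω : (Fin n → ℝ) → Fin n → ℝ) (x : Fin n → ℝ) : Matrix (Fin (n + 1)) (Fin (n + 1)) ℝ :=
  Matrix.of fun μ ν =>
    Fin.cases
      (Fin.cases (-1 : ℝ) (fun j => -ω x j) ν)
      (fun i => Fin.cases (-ω x i) (fun j => g x i j - ω x i * ω x j) ν)
      μ

/-- Spacetime partial derivative `∂_μ` of a time-independent function: `∂₀ = ∂_t` gives `0`,
and `∂_{i+1}` is the spatial derivative `∂ᵢ`. -/
noncomputable def pdbar {n : ℕ} (f : (Fin n → ℝ) → ℝ) (μ : Fin (n + 1)) (x : Fin n → ℝ) : ℝ :=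
  Fin.cases 0 (fun i => pd f i x) μ

/-- Christoffel symbols `Γ̄^μ_{αβ}` of the stationary Lorentzian metric `ḡ`. -/
noncomputable def ChristoffelBar {n : ℕ} (g : (Fin n → ℝ) → Matrix (Fin n) (Fin n) ℝ)
    (ω : (Fin n → ℝ) → Fin n → ℝ) (x : Fin n → ℝ) (μ α β : Fin (n + 1)) : ℝ :=
  (1 / 2) * ∑ ν, (gbar g ω x)⁻¹ μ ν *
    (pdbar (fun y => gbar g ω y ν β) α x + pdbar (fun y => gbar g ω y ν α) β x
      - pdbar (fun y => gbar g ω y α β) ν x)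

/-! ### Auxiliary lemmas -/

section Helpers

variable {n : ℕ} {g : (Fin n → ℝ) → Matrix (Fin n) (Fin n) ℝ}
  {ω : (Fin n → ℝ) → Fin n → ℝ} {y p : Fin n → ℝ}

@[simp] theorem gbar00 : gbar g ω y 0 0 = -1 := by simp [gbar]
@[simp] theorem gbar0s (j : Fin n) : gbar g ω y 0 j.succ = -ω y j := by simp [gbar]
@[simp] theorem gbars0 (i : Fin n) : gbar g ω y i.succ 0 = -ω y i := by simp [gbar]
@[simp] theorem gbarss (i j : Fin n) : gbar g ω y i.succ j.succ = g y i j - ω y i * ω y j := by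
  simp [gbar]

@[simp] theorem pdbar_zero (f : (Fin n → ℝ) → ℝ) : pdbar f 0 p = 0 := rfl
@[simp] theorem pdbar_succ (f : (Fin n → ℝ) → ℝ) (i : Fin n) : pdbar f i.succ p = pd f i p := by
  simp [pdbar]

@[simp] theorem pd_const (c : ℝ) (i : Fin n) : pd (fun _ => c) i p = 0 := by
  simp [pd]

@[simp] theorem pd_neg (f : (Fin n → ℝ) → ℝ) (i : Fin n) : pd (fun y => -f y) i p = -pd f i p := by
  simp [pd, fderiv_neg]

theorem pd_sub {f h : (Fin n → ℝ) → ℝ} (hf : DifferentiableAt ℝ f p)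
    (hh : DifferentiableAt ℝ h p) (i : Fin n) :
    pd (fun y => f y - h y) i p = pd f i p - pd h i p := by
  simp [pd, fderiv_fun_sub hf hh]

theorem pd_mul {f h : (Fin n → ℝ) → ℝ} (hf : DifferentiableAt ℝ f p)
    (hh : DifferentiableAt ℝ h p) (i : Fin n) :
    pd (fun y => f y * h y) i p = f p * pd h i p + h p * pd f i p := by
  simp [pd, fderiv_fun_mul hf hh]

theorem pi_single_sum (v : Fin n → ℝ) : v = ∑ j, v j • (Pi.single j 1 : Fin n → ℝ) := by
  funext k
  simp [Pi.single_apply, Finset.sum_apply]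

theorem fderiv_apply_eq_sum_pd (f : (Fin n → ℝ) → ℝ) (v : Fin n → ℝ) :
    fderiv ℝ f p v = ∑ j, v j * pd f j p := by
  conv_lhs => rw [pi_single_sum v]
  rw [map_sum]
  exact Finset.sum_congr rfl fun j _ => by rw [map_smul]; rfl

theorem hasDerivAt_comp_pd {f : (Fin n → ℝ) → ℝ} {x : ℝ → Fin n → ℝ}
    {x' : Fin n → ℝ} {s : ℝ} (hf : DifferentiableAt ℝ f (x s))
    (hx : HasDerivAt x x' s) :
    HasDerivAt (fun u => f (x u)) (∑ j, x' j * pd f j (x s)) s := by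
  have h := hf.hasFDerivAt.comp_hasDerivAt s hx
  rwa [fderiv_apply_eq_sum_pd] at h

theorem swap_contract (A B : Matrix (Fin n) (Fin n) ℝ) (h : A * B = 1) (f : Fin n → ℝ)
    (r : Fin n) : ∑ i, A r i * (∑ l, B i l * f l) = f r := by
  have h1 : ∀ l, ∑ i, A r i * B i l = (1 : Matrix (Fin n) (Fin n) ℝ) r l := fun l => by
    rw [← Matrix.mul_apply, h]
  have h2 : ∑ i, A r i * (∑ l, B i l * f l) = ∑ l, (∑ i, A r i * B i l) * f l := by
    simp only [Finset.mul_sum, Finset.sum_mul]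
    rw [Finset.sum_comm]
    exact Finset.sum_congr rfl fun l _ => Finset.sum_congr rfl fun i _ => by ring
  rw [h2]
  simp only [h1, Matrix.one_apply]
  simp

theorem rot3 (f : Fin n → Fin n → Fin n → ℝ) :
    ∑ i, ∑ j, ∑ k, f i j k = ∑ j, ∑ k, ∑ i, f i j k := by
  rw [Finset.sum_comm]
  exact Finset.sum_congr rfl fun j _ => Finset.sum_comm

theorem ginv_symm (G : Matrix (Fin n) (Fin n) ℝ) (hs : G.IsSymm) (i j : Fin n) :
    G⁻¹ i j = G⁻¹ j i := by
  have h : G⁻¹.transpose = G⁻¹ := by rw [Matrix.transpose_nonsing_inv, hs.eq]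
  conv_lhs => rw [← h]
  rfl


theorem lowered_magnetic {n : ℕ} (g : (Fin n → ℝ) → Matrix (Fin n) (Fin n) ℝ)
    (ω : (Fin n → ℝ) → Fin n → ℝ) (p v a : Fin n → ℝ)
    (hd : IsUnit (g p).det)
    (hM : ∀ i, a i + ∑ j, ∑ k, Christoffel g p i j k * v j * v k
        = ∑ j, LorentzF g ω p i j * v j)
    (r : Fin n) :
    (∑ i, g p r i * a i) + (1/2) * (∑ j, ∑ k,
      (pd (fun y => g y r k) j p + pd (fun y => g y r j) k p - pd (fun y => g y j k) r p)
        * v j * v k)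
      = -(∑ j, dOmega ω p r j * v j) := by
  have hgg : g p * (g p)⁻¹ = 1 := Matrix.mul_nonsing_inv _ hd
  have h0 : ∑ i, g p r i * (a i + ∑ j, ∑ k, Christoffel g p i j k * v j * v k)
      = ∑ i, g p r i * (∑ j, LorentzF g ω p i j * v j) :=
    Finset.sum_congr rfl fun i _ => by rw [hM i]
  -- split LHS
  have hL : ∑ i, g p r i * (a i + ∑ j, ∑ k, Christoffel g p i j k * v j * v k)
      = (∑ i, g p r i * a i) + ∑ i, g p r i * (∑ j, ∑ k, Christoffel g p i j k * v j * v k) := by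
    rw [← Finset.sum_add_distrib]
    exact Finset.sum_congr rfl fun i _ => by ring
  -- Christoffel contraction
  have hGamma : ∀ j k, ∑ i, g p r i * Christoffel g p i j k
      = (1/2) * (pd (fun y => g y r k) j p + pd (fun y => g y r j) k p
          - pd (fun y => g y j k) r p) := by
    intro j k
    have h1 : ∑ i, g p r i * Christoffel g p i j k
        = (1/2) * ∑ i, g p r i * (∑ l, (g p)⁻¹ i l *
            (pd (fun y => g y l k) j p + pd (fun y => g y l j) k p
              - pd (fun y => g y j k) l p)) := by
      rw [Finset.mul_sum]
      exact Finset.sum_congr rfl fun i _ => by rw [Christoffel]; ring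
    rw [h1, swap_contract (g p) (g p)⁻¹ hgg
      (fun l => pd (fun y => g y l k) j p + pd (fun y => g y l j) k p
        - pd (fun y => g y j k) l p) r]
  have hMid : ∑ i, g p r i * (∑ j, ∑ k, Christoffel g p i j k * v j * v k)
      = (1/2) * (∑ j, ∑ k,
        (pd (fun y => g y r k) j p + pd (fun y => g y r j) k p
          - pd (fun y => g y j k) r p) * v j * v k) := by
    have h2 : ∑ i, g p r i * (∑ j, ∑ k, Christoffel g p i j k * v j * v k)
        = ∑ i, ∑ j, ∑ k, g p r i * Christoffel g p i j k * v j * v k := by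
      refine Finset.sum_congr rfl fun i _ => ?_
      rw [Finset.mul_sum]
      exact Finset.sum_congr rfl fun j _ => by
        rw [Finset.mul_sum]; exact Finset.sum_congr rfl fun k _ => by ring
    rw [h2, rot3, Finset.mul_sum]
    refine Finset.sum_congr rfl fun j _ => ?_
    rw [Finset.mul_sum]
    refine Finset.sum_congr rfl fun k _ => ?_
    have h3 : ∑ i, g p r i * Christoffel g p i j k * v j * v k
        = (∑ i, g p r i * Christoffel g p i j k) * v j * v k := by
      simp only [Finset.sum_mul]
    rw [h3, hGamma j k]; ring
  -- Lorentz contraction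
  have hF : ∀ j, ∑ i, g p r i * LorentzF g ω p i j = -dOmega ω p r j := by
    intro j
    have h1 : ∑ i, g p r i * LorentzF g ω p i j
        = -∑ i, g p r i * (∑ l, (g p)⁻¹ i l * dOmega ω p l j) := by
      rw [← Finset.sum_neg_distrib]
      exact Finset.sum_congr rfl fun i _ => by rw [LorentzF]; ring
    rw [h1, swap_contract (g p) (g p)⁻¹ hgg (fun l => dOmega ω p l j) r]
  have hR : ∑ i, g p r i * (∑ j, LorentzF g ω p i j * v j)
      = -(∑ j, dOmega ω p r j * v j) := by
    have h2 : ∑ i, g p r i * (∑ j, LorentzF g ω p i j * v j)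
        = ∑ j, (∑ i, g p r i * LorentzF g ω p i j) * v j := by
      simp only [Finset.mul_sum, Finset.sum_mul]
      rw [Finset.sum_comm]
      exact Finset.sum_congr rfl fun j _ => Finset.sum_congr rfl fun i _ => by ring
    rw [h2, ← Finset.sum_neg_distrib]
    exact Finset.sum_congr rfl fun j _ => by rw [hF j]; ring
  rw [hL, hMid, hR] at h0
  exact h0

theorem E_time (hωd : ∀ i, DifferentiableAt ℝ (fun y => ω y i) p)
    (T' T'' : ℝ) (v a : Fin n → ℝ)
    (hT'' : T'' = -∑ i, ((∑ j, v j * pd (fun y => ω y i) j p) * v i + ω p i * a i)) :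
    (∑ ρ, gbar g ω p 0 ρ * (Fin.cons T'' a : Fin (n+1) → ℝ) ρ) + (1/2) * (∑ α, ∑ β,
      (pdbar (fun y => gbar g ω y 0 β) α p + pdbar (fun y => gbar g ω y 0 α) β p
        - pdbar (fun y => gbar g ω y α β) 0 p) * (Fin.cons T' v : Fin (n+1) → ℝ) α * (Fin.cons T' v : Fin (n+1) → ℝ) β) = 0 := by
  simp only [Fin.sum_univ_succ, Fin.cons_zero, Fin.cons_succ, gbar00, gbar0s, gbars0, gbarss,
    pdbar_zero, pdbar_succ, pd_const, pd_neg, zero_add, add_zero, sub_zero, zero_mul, mul_zero,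
    Finset.sum_const_zero]
  set D := ∑ i, ∑ j, pd (fun y => ω y j) i p * v i * v j with hD
  set W := ∑ i, ω p i * a i with hW
  have h1 : ∑ i, ((∑ j, v j * pd (fun y => ω y i) j p) * v i + ω p i * a i) = D + W := by
    rw [Finset.sum_add_distrib, hW, hD]
    congr 1
    have : ∑ i, (∑ j, v j * pd (fun y => ω y i) j p) * v i
        = ∑ i, ∑ j, (v j * pd (fun y => ω y i) j p) * v i :=
      Finset.sum_congr rfl fun i _ => by rw [Finset.sum_mul]
    rw [this, Finset.sum_comm]
    exact Finset.sum_congr rfl fun i _ => Finset.sum_congr rfl fun j _ => by ring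
  have h2a : ∑ i, ∑ j, pd (fun y => ω y i) j p * v i * v j = D := by
    rw [hD, Finset.sum_comm]
    exact Finset.sum_congr rfl fun i _ => Finset.sum_congr rfl fun j _ => by ring
  have h2 : ∑ i, ∑ j, (-pd (fun y => ω y j) i p + -pd (fun y => ω y i) j p) * v i * v j
      = -D - D := by
    have hsplit : ∀ i, ∑ j, (-pd (fun y => ω y j) i p + -pd (fun y => ω y i) j p) * v i * v j
        = (∑ j, -(pd (fun y => ω y j) i p * v i * v j))
          + ∑ j, -(pd (fun y => ω y i) j p * v i * v j) := by
      intro i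
      rw [← Finset.sum_add_distrib]
      exact Finset.sum_congr rfl fun j _ => by ring
    simp only [hsplit]
    rw [Finset.sum_add_distrib]
    simp only [Finset.sum_neg_distrib]
    rw [← hD, h2a]; ring
  have h3 : ∑ i, -ω p i * a i = -W := by
    rw [hW, ← Finset.sum_neg_distrib]
    exact Finset.sum_congr rfl fun i _ => by ring
  rw [hT'', h1, h3, h2]
  ring


theorem E_spatial
    (hgd : ∀ i j, DifferentiableAt ℝ (fun y => g y i j) p)
    (hωd : ∀ i, DifferentiableAt ℝ (fun y => ω y i) p)
    (hd : IsUnit (g p).det)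
    (T' T'' : ℝ) (v a : Fin n → ℝ)
    (hT' : T' = 1 - ∑ i, ω p i * v i)
    (hT'' : T'' = -∑ i, ((∑ j, v j * pd (fun y => ω y i) j p) * v i + ω p i * a i))
    (hM : ∀ i, a i + ∑ j, ∑ k, Christoffel g p i j k * v j * v k
        = ∑ j, LorentzF g ω p i j * v j)
    (r : Fin n) :
    (∑ ρ, gbar g ω p r.succ ρ * (Fin.cons T'' a : Fin (n+1) → ℝ) ρ) + (1/2) * (∑ α, ∑ β,
      (pdbar (fun y => gbar g ω y r.succ β) α p + pdbar (fun y => gbar g ω y r.succ α) β p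
        - pdbar (fun y => gbar g ω y α β) r.succ p)
        * (Fin.cons T' v : Fin (n+1) → ℝ) α * (Fin.cons T' v : Fin (n+1) → ℝ) β) = 0 := by
  have hpdss : ∀ (l i j : Fin n), pd (fun y => g y i j - ω y i * ω y j) l p
      = pd (fun y => g y i j) l p
        - (ω p i * pd (fun y => ω y j) l p + ω p j * pd (fun y => ω y i) l p) := by
    intro l i j
    rw [pd_sub (hgd i j) (by exact (hωd i).mul (hωd j) : DifferentiableAt ℝ (fun y => ω y i * ω y j) p), pd_mul (hωd i) (hωd j)]
  simp only [Fin.sum_univ_succ, Fin.cons_zero, Fin.cons_succ, gbar00, gbar0s, gbars0, gbarss,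
    pdbar_zero, pdbar_succ, pd_const, pd_neg, hpdss, zero_add, add_zero, sub_zero, zero_mul,
    mul_zero, Finset.sum_const_zero, neg_zero]
  rw [hT'']
  have hsum_inner : ∑ i, ((∑ j, v j * pd (fun y => ω y i) j p) * v i + ω p i * a i)
      = (∑ i, ∑ j, pd (fun y => ω y j) i p * v i * v j) + ∑ i, ω p i * a i := by
    rw [Finset.sum_add_distrib]
    congr 1
    have h' : ∑ i, (∑ j, v j * pd (fun y => ω y i) j p) * v i
        = ∑ i, ∑ j, (v j * pd (fun y => ω y i) j p) * v i :=
      Finset.sum_congr rfl fun i _ => by rw [Finset.sum_mul]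
    rw [h', Finset.sum_comm]
    exact Finset.sum_congr rfl fun i _ => Finset.sum_congr rfl fun j _ => by ring
  rw [hsum_inner]
  have f1 : ∑ x, (g p r x - ω p r * ω p x) * a x
      = (∑ i, g p r i * a i) - ω p r * ∑ i, ω p i * a i := by
    rw [Finset.mul_sum, ← Finset.sum_sub_distrib]
    exact Finset.sum_congr rfl fun x _ => by ring
  rw [f1]
  have f2 : ∀ c : ℝ, ∑ x, (-pd (fun y => ω y r) x p - -pd (fun y => ω y x) r p) * c * v x
      = c * ((∑ i, pd (fun y => ω y i) r p * v i) - ∑ i, pd (fun y => ω y r) i p * v i) := by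
    intro c
    rw [← Finset.sum_sub_distrib, Finset.mul_sum]
    exact Finset.sum_congr rfl fun x _ => by ring
  rw [Finset.sum_add_distrib]
  have f2' : ∑ x, (-pd (fun y => ω y r) x p - -pd (fun y => ω y x) r p) * v x * T'
      = T' * ((∑ i, pd (fun y => ω y i) r p * v i) - ∑ i, pd (fun y => ω y r) i p * v i) := by
    rw [← Finset.sum_sub_distrib, Finset.mul_sum]
    exact Finset.sum_congr rfl fun x _ => by ring
  rw [f2 T', f2']
  have hswap : ∑ x, ∑ y, pd (fun q => ω q x) y p * v x * v y
      = ∑ i, ∑ j, pd (fun q => ω q j) i p * v i * v j := by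
    rw [Finset.sum_comm]
    exact Finset.sum_congr rfl fun i _ => Finset.sum_congr rfl fun j _ => by ring
  have f3 : ∑ x, ∑ y,
      (pd (fun q => g q r y) x p - (ω p r * pd (fun q => ω q y) x p + ω p y * pd (fun q => ω q r) x p)
        + (pd (fun q => g q r x) y p - (ω p r * pd (fun q => ω q x) y p + ω p x * pd (fun q => ω q r) y p))
        - (pd (fun q => g q x y) r p - (ω p x * pd (fun q => ω q y) r p + ω p y * pd (fun q => ω q x) r p)))
        * v x * v y
      = (∑ x, ∑ y, (pd (fun q => g q r y) x p + pd (fun q => g q r x) y p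
          - pd (fun q => g q x y) r p) * v x * v y)
        - ω p r * (∑ i, ∑ j, pd (fun q => ω q j) i p * v i * v j)
        - (∑ i, pd (fun q => ω q r) i p * v i) * (∑ i, ω p i * v i)
        - ω p r * (∑ i, ∑ j, pd (fun q => ω q j) i p * v i * v j)
        - (∑ i, ω p i * v i) * (∑ i, pd (fun q => ω q r) i p * v i)
        + (∑ i, ω p i * v i) * (∑ i, pd (fun q => ω q i) r p * v i)
        + (∑ i, pd (fun q => ω q i) r p * v i) * (∑ i, ω p i * v i) := by
    have step1 : ∑ x, ∑ y, (pd (fun q => g q r y) x p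
          - (ω p r * pd (fun q => ω q y) x p + ω p y * pd (fun q => ω q r) x p)
        + (pd (fun q => g q r x) y p - (ω p r * pd (fun q => ω q x) y p + ω p x * pd (fun q => ω q r) y p))
        - (pd (fun q => g q x y) r p - (ω p x * pd (fun q => ω q y) r p + ω p y * pd (fun q => ω q x) r p)))
        * v x * v y
        = ∑ x, ∑ y,
          ((pd (fun q => g q r y) x p + pd (fun q => g q r x) y p - pd (fun q => g q x y) r p) * v x * v y
            - ω p r * (pd (fun q => ω q y) x p * v x * v y)
            - (pd (fun q => ω q r) x p * v x) * (ω p y * v y)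
            - ω p r * (pd (fun q => ω q x) y p * v x * v y)
            - (ω p x * v x) * (pd (fun q => ω q r) y p * v y)
            + (ω p x * v x) * (pd (fun q => ω q y) r p * v y)
            + (pd (fun q => ω q x) r p * v x) * (ω p y * v y)) :=
      Finset.sum_congr rfl fun x _ => Finset.sum_congr rfl fun y _ => by ring
    rw [step1]
    simp only [Finset.sum_sub_distrib, Finset.sum_add_distrib]
    have e2 : ∑ x, ∑ y, ω p r * (pd (fun q => ω q y) x p * v x * v y)
        = ω p r * ∑ i, ∑ j, pd (fun q => ω q j) i p * v i * v j := by
      rw [Finset.mul_sum]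
      exact Finset.sum_congr rfl fun x _ => by rw [Finset.mul_sum]
    have e4 : ∑ x, ∑ y, ω p r * (pd (fun q => ω q x) y p * v x * v y)
        = ω p r * ∑ i, ∑ j, pd (fun q => ω q j) i p * v i * v j := by
      rw [← hswap, Finset.mul_sum]
      exact Finset.sum_congr rfl fun x _ => by rw [Finset.mul_sum]
    rw [e2, e4, ← Finset.sum_mul_sum, ← Finset.sum_mul_sum, ← Finset.sum_mul_sum,
      ← Finset.sum_mul_sum]
  rw [f3]
  have hMlow := lowered_magnetic g ω p v a hd hM r
  have hdω : ∑ j, dOmega ω p r j * v j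
      = (∑ i, pd (fun q => ω q i) r p * v i) - ∑ i, pd (fun q => ω q r) i p * v i := by
    rw [← Finset.sum_sub_distrib]
    exact Finset.sum_congr rfl fun j _ => by rw [dOmega]; ring
  rw [hdω] at hMlow
  linear_combination hMlow
    + ((∑ i, pd (fun q => ω q i) r p * v i) - ∑ i, pd (fun q => ω q r) i p * v i) * hT'

end Helpers


/-- Explicit right inverse of `gbar`. -/
noncomputable def gbarInv {n : ℕ} (g : (Fin n → ℝ) → Matrix (Fin n) (Fin n) ℝ)
    (ω : (Fin n → ℝ) → Fin n → ℝ) (p : Fin n → ℝ) : Matrix (Fin (n + 1)) (Fin (n + 1)) ℝ :=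
  Matrix.of fun μ ν =>
    Fin.cases
      (Fin.cases (-1 + ∑ k, ∑ l, (g p)⁻¹ k l * ω p k * ω p l)
        (fun j => -∑ k, (g p)⁻¹ j k * ω p k) ν)
      (fun i => Fin.cases (-∑ k, (g p)⁻¹ i k * ω p k) (fun j => (g p)⁻¹ i j) ν)
      μ

theorem gbar_mul_inv {n : ℕ} (g : (Fin n → ℝ) → Matrix (Fin n) (Fin n) ℝ)
    (ω : (Fin n → ℝ) → Fin n → ℝ) (p : Fin n → ℝ) (hs : (g p).IsSymm)
    (hd : IsUnit (g p).det) :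
    gbar g ω p * gbarInv g ω p = 1 := by
  ext μ ν
  rw [Matrix.mul_apply, Fin.sum_univ_succ]
  induction μ using Fin.cases with
  | zero =>
    induction ν using Fin.cases with
    | zero =>
      simp only [gbar, gbarInv, Matrix.of_apply, Fin.cases_zero, Fin.cases_succ,
        Matrix.one_apply_eq]
      have h1 : ∑ i : Fin n, -ω p i * -∑ k, (g p)⁻¹ i k * ω p k
          = ∑ k, ∑ l, (g p)⁻¹ k l * ω p k * ω p l := by
        simp only [neg_mul_neg, Finset.mul_sum]
        exact Finset.sum_congr rfl fun i _ => Finset.sum_congr rfl fun k _ => by ring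
      rw [h1]; ring
    | succ j =>
      simp only [gbar, gbarInv, Matrix.of_apply, Fin.cases_zero, Fin.cases_succ]
      rw [Matrix.one_apply_ne (Fin.succ_ne_zero j).symm]
      have h1 : ∑ i : Fin n, -ω p i * (g p)⁻¹ i j = -∑ k, (g p)⁻¹ j k * ω p k := by
        rw [← Finset.sum_neg_distrib]
        exact Finset.sum_congr rfl fun i _ => by rw [ginv_symm _ hs i j]; ring
      rw [h1]; ring
  | succ i =>
    induction ν using Fin.cases with
    | zero =>
      simp only [gbar, gbarInv, Matrix.of_apply, Fin.cases_zero, Fin.cases_succ]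
      rw [Matrix.one_apply_ne (Fin.succ_ne_zero i)]
      have h2 : ∑ j, g p i j * (∑ k, (g p)⁻¹ j k * ω p k) = ω p i :=
        swap_contract (g p) (g p)⁻¹ (Matrix.mul_nonsing_inv _ hd) (ω p) i
      have h3 : ∑ j, (ω p i * ω p j) * (∑ k, (g p)⁻¹ j k * ω p k)
          = ω p i * ∑ k, ∑ l, (g p)⁻¹ k l * ω p k * ω p l := by
        simp only [Finset.mul_sum]
        exact Finset.sum_congr rfl fun j _ => Finset.sum_congr rfl fun k _ => by ring
      have hsplit : ∑ j, (g p i j - ω p i * ω p j) * (-∑ k, (g p)⁻¹ j k * ω p k)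
          = (∑ j, (ω p i * ω p j) * (∑ k, (g p)⁻¹ j k * ω p k))
            - (∑ j, g p i j * (∑ k, (g p)⁻¹ j k * ω p k)) := by
        rw [← Finset.sum_sub_distrib]
        exact Finset.sum_congr rfl fun j _ => by ring
      rw [hsplit, h2, h3]; ring
    | succ j =>
      simp only [gbar, gbarInv, Matrix.of_apply, Fin.cases_zero, Fin.cases_succ]
      have hone : (1 : Matrix (Fin (n+1)) (Fin (n+1)) ℝ) i.succ j.succ
          = (1 : Matrix (Fin n) (Fin n) ℝ) i j := by
        simp [Matrix.one_apply, Fin.succ_inj]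
      rw [hone]
      have h2 : ∑ l, g p i l * (g p)⁻¹ l j = (1 : Matrix (Fin n) (Fin n) ℝ) i j := by
        rw [← Matrix.mul_apply, Matrix.mul_nonsing_inv _ hd]
      have h3 : ∑ l, ω p l * (g p)⁻¹ l j = ∑ k, (g p)⁻¹ j k * ω p k := by
        refine Finset.sum_congr rfl fun l _ => by rw [ginv_symm _ hs l j]; ring
      have hsplit : ∑ l, (g p i l - ω p i * ω p l) * (g p)⁻¹ l j
          = (∑ l, g p i l * (g p)⁻¹ l j) - ω p i * (∑ l, ω p l * (g p)⁻¹ l j) := by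
        rw [Finset.mul_sum, ← Finset.sum_sub_distrib]
        exact Finset.sum_congr rfl fun l _ => by ring
      rw [hsplit, h2, h3]; ring

theorem gbar_isUnit_det {n : ℕ} (g : (Fin n → ℝ) → Matrix (Fin n) (Fin n) ℝ)
    (ω : (Fin n → ℝ) → Fin n → ℝ) (p : Fin n → ℝ) (hs : (g p).IsSymm)
    (hd : IsUnit (g p).det) : IsUnit (gbar g ω p).det :=
  Matrix.isUnit_det_of_right_inverse (gbar_mul_inv g ω p hs hd)

theorem raise {n : ℕ} (A : Matrix (Fin n) (Fin n) ℝ) (hA : IsUnit A.det)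
    (z u : Fin n → ℝ) (C : Fin n → Fin n → Fin n → ℝ)
    (hE : ∀ ν, (∑ ρ, A ν ρ * z ρ) + (1/2) * (∑ α, ∑ β, C ν α β * u α * u β) = 0)
    (μ : Fin n) :
    z μ + ∑ α, ∑ β, ((1/2) * ∑ ν, A⁻¹ μ ν * C ν α β) * u α * u β = 0 := by
  have rot : ∀ f : Fin n → Fin n → Fin n → ℝ,
      ∑ α, ∑ β, ∑ ν, f α β ν = ∑ ν, ∑ α, ∑ β, f α β ν := by
    intro f
    have h1 : ∑ α, ∑ β, ∑ ν, f α β ν = ∑ α, ∑ ν, ∑ β, f α β ν :=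
      Finset.sum_congr rfl fun α _ => Finset.sum_comm
    rw [h1, Finset.sum_comm]
  have key : ∑ α, ∑ β, ((1/2) * ∑ ν, A⁻¹ μ ν * C ν α β) * u α * u β
      = ∑ ν, A⁻¹ μ ν * ((1/2) * (∑ α, ∑ β, C ν α β * u α * u β)) := by
    simp only [Finset.mul_sum, Finset.sum_mul]
    rw [rot fun α β ν => 1/2 * (A⁻¹ μ ν * C ν α β) * u α * u β]
    exact Finset.sum_congr rfl fun ν _ => Finset.sum_congr rfl fun α _ =>
      Finset.sum_congr rfl fun β _ => by ring
  rw [key]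
  have h2 : ∀ ν, (1/2) * (∑ α, ∑ β, C ν α β * u α * u β) = -(∑ ρ, A ν ρ * z ρ) := by
    intro ν; linarith [hE ν]
  simp only [h2, mul_neg]
  have h3 : ∑ ν, A⁻¹ μ ν * (∑ ρ, A ν ρ * z ρ) = z μ :=
    swap_contract A⁻¹ A (Matrix.nonsing_inv_mul A hA) z μ
  rw [Finset.sum_neg_distrib, h3]
  ring

/-- If `x` is a twice differentiable unit-speed magnetic geodesic in `U` and
`t` solves `ṫ = 1 - ωᵢ(x) ẋⁱ`, then `γ = (t, x)` is a null geodesic of the stationary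
Lorentzian metric `ḡ`: it satisfies the geodesic equation
`γ̈^μ + Γ̄^μ_{αβ}(x) γ̇^α γ̇^β = 0` and `ḡ_{μν}(x) γ̇^μ γ̇^ν = 0`. -/
theorem magnetic_geodesic_lifts_to_null_geodesic
    (n : ℕ) (U : Set (Fin n → ℝ)) (hU : IsOpen U)
    (g : (Fin n → ℝ) → Matrix (Fin n) (Fin n) ℝ)
    (hg : ∀ i j, ContDiffOn ℝ (⊤ : ℕ∞) (fun x => g x i j) U)
    (hgsymm : ∀ x ∈ U, (g x).IsSymm)
    (hginv : ∀ x ∈ U, IsUnit (g x).det)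
    (ω : (Fin n → ℝ) → Fin n → ℝ)
    (hω : ∀ i, ContDiffOn ℝ (⊤ : ℕ∞) (fun x => ω x i) U)
    (a b : ℝ)
    (x x' x'' : ℝ → Fin n → ℝ)
    (hxU : ∀ s ∈ Set.Ioo a b, x s ∈ U)
    (hx : ∀ s ∈ Set.Ioo a b, HasDerivAt x (x' s) s)
    (hx' : ∀ s ∈ Set.Ioo a b, HasDerivAt x' (x'' s) s)
    (hunit : ∀ s ∈ Set.Ioo a b, ∑ i, ∑ j, g (x s) i j * x' s i * x' s j = 1)
    (lorentz : ∀ s ∈ Set.Ioo a b, ∀ i,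
      x'' s i + ∑ j, ∑ k, Christoffel g (x s) i j k * x' s j * x' s k
        = ∑ j, LorentzF g ω (x s) i j * x' s j)
    (t : ℝ → ℝ)
    (ht : ∀ s ∈ Set.Ioo a b, HasDerivAt t (1 - ∑ i, ω (x s) i * x' s i) s)
    (γ : ℝ → Fin (n + 1) → ℝ)
    (hγ : ∀ s, γ s = Fin.cons (t s) (x s)) :
    ∃ γ' γ'' : ℝ → Fin (n + 1) → ℝ,
      (∀ s ∈ Set.Ioo a b, HasDerivAt γ (γ' s) s) ∧
      (∀ s ∈ Set.Ioo a b, HasDerivAt γ' (γ'' s) s) ∧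
      (∀ s ∈ Set.Ioo a b, ∀ μ : Fin (n + 1),
        γ'' s μ + ∑ α, ∑ β, ChristoffelBar g ω (x s) μ α β * γ' s α * γ' s β = 0) ∧
      (∀ s ∈ Set.Ioo a b,
        ∑ μ, ∑ ν, gbar g ω (x s) μ ν * γ' s μ * γ' s ν = 0) := by
  -- notation
  set T' : ℝ → ℝ := fun s => 1 - ∑ i, ω (x s) i * x' s i with hT'def
  set T'' : ℝ → ℝ := fun s =>
    -∑ i, ((∑ j, x' s j * pd (fun y => ω y i) j (x s)) * x' s i + ω (x s) i * x'' s i)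
    with hT''def
  refine ⟨fun s => Fin.cons (T' s) (x' s), fun s => Fin.cons (T'' s) (x'' s), ?_, ?_, ?_, ?_⟩
  · -- γ' is the derivative of γ
    intro s hs
    rw [hasDerivAt_pi]
    intro μ
    induction μ using Fin.cases with
    | zero =>
      have h0 : (fun u => γ u 0) = t := funext fun u => by rw [hγ u, Fin.cons_zero]
      rw [h0]
      exact ht s hs
    | succ i =>
      have h0 : (fun u => γ u i.succ) = fun u => x u i := funext fun u => by
        rw [hγ u, Fin.cons_succ]
      rw [h0]
      convert hasDerivAt_pi.mp (hx s hs) i using 1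
      exact Fin.cons_succ _ _ _
  · -- γ'' is the derivative of γ'
    intro s hs
    rw [hasDerivAt_pi]
    intro μ
    induction μ using Fin.cases with
    | zero =>
      simp only [Fin.cons_zero]
      have hωd : ∀ u ∈ Set.Ioo a b, ∀ i, DifferentiableAt ℝ (fun y => ω y i) (x u) :=
        fun u hu i => ((hω i).differentiableOn (by simp)).differentiableAt
          (hU.mem_nhds (hxU u hu))
      have hsum : HasDerivAt (fun u => ∑ i, ω (x u) i * x' u i)
          (∑ i, ((∑ j, x' s j * pd (fun y => ω y i) j (x s)) * x' s i
            + ω (x s) i * x'' s i)) s := by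
        apply HasDerivAt.fun_sum
        intro i _
        exact (hasDerivAt_comp_pd (hωd s hs i) (hx s hs)).mul
          (hasDerivAt_pi.mp (hx' s hs) i)
      have := (hasDerivAt_const s (1:ℝ)).fun_sub hsum
      simpa [hT'def, hT''def, zero_sub] using this
    | succ i =>
      simp only [Fin.cons_succ]
      exact hasDerivAt_pi.mp (hx' s hs) i
  · -- geodesic equation
    intro s hs μ
    have hp : x s ∈ U := hxU s hs
    have hgd : ∀ i j, DifferentiableAt ℝ (fun y => g y i j) (x s) :=
      fun i j => ((hg i j).differentiableOn (by simp)).differentiableAt (hU.mem_nhds hp)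
    have hωd : ∀ i, DifferentiableAt ℝ (fun y => ω y i) (x s) :=
      fun i => ((hω i).differentiableOn (by simp)).differentiableAt (hU.mem_nhds hp)
    have hdet : IsUnit (g (x s)).det := hginv (x s) hp
    have hsymm : (g (x s)).IsSymm := hgsymm (x s) hp
    have hE : ∀ ν, (∑ ρ, gbar g ω (x s) ν ρ * (Fin.cons (T'' s) (x'' s) : Fin (n+1) → ℝ) ρ)
        + (1/2) * (∑ α, ∑ β,
          (pdbar (fun y => gbar g ω y ν β) α (x s) + pdbar (fun y => gbar g ω y ν α) β (x s)
            - pdbar (fun y => gbar g ω y α β) ν (x s))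
            * (Fin.cons (T' s) (x' s) : Fin (n+1) → ℝ) α
            * (Fin.cons (T' s) (x' s) : Fin (n+1) → ℝ) β) = 0 := by
      intro ν
      induction ν using Fin.cases with
      | zero => exact E_time hωd (T' s) (T'' s) (x' s) (x'' s) rfl
      | succ r =>
        exact E_spatial hgd hωd hdet (T' s) (T'' s) (x' s) (x'' s) rfl rfl
          (fun i => lorentz s hs i) r
    have hraise := raise (gbar g ω (x s)) (gbar_isUnit_det g ω (x s) hsymm hdet)
      (Fin.cons (T'' s) (x'' s)) (Fin.cons (T' s) (x' s))
      (fun ν α β => pdbar (fun y => gbar g ω y ν β) α (x s)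
        + pdbar (fun y => gbar g ω y ν α) β (x s)
        - pdbar (fun y => gbar g ω y α β) ν (x s)) hE μ
    simpa only [ChristoffelBar] using hraise
  · -- null condition
    intro s hs
    have h1 := hunit s hs
    simp only [Fin.sum_univ_succ, Fin.cons_zero, Fin.cons_succ, gbar00, gbar0s, gbars0, gbarss]
    have h2 : ∑ i, ∑ j, (g (x s) i j - ω (x s) i * ω (x s) j) * x' s i * x' s j
        = (∑ i, ∑ j, g (x s) i j * x' s i * x' s j)
          - (∑ i, ω (x s) i * x' s i) * (∑ i, ω (x s) i * x' s i) := by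
      rw [Finset.sum_mul_sum, ← Finset.sum_sub_distrib]
      refine Finset.sum_congr rfl fun i _ => ?_
      rw [← Finset.sum_sub_distrib]
      exact Finset.sum_congr rfl fun j _ => by ring
    have h3 : ∑ i, -ω (x s) i * T' s * x' s i = -(T' s * ∑ i, ω (x s) i * x' s i) := by
      rw [Finset.mul_sum, ← Finset.sum_neg_distrib]
      exact Finset.sum_congr rfl fun i _ => by ring
    have h4 : ∑ i, (-ω (x s) i * x' s i * T' s
        + ∑ j, (g (x s) i j - ω (x s) i * ω (x s) j) * x' s i * x' s j)
        = -(T' s * ∑ i, ω (x s) i * x' s i)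
          + ((∑ i, ∑ j, g (x s) i j * x' s i * x' s j)
            - (∑ i, ω (x s) i * x' s i) * (∑ i, ω (x s) i * x' s i)) := by
      rw [Finset.sum_add_distrib, h2]
      congr 1
      rw [Finset.mul_sum, ← Finset.sum_neg_distrib]
      exact Finset.sum_congr rfl fun i _ => by ring
    rw [h3, h4, h1]
    have hT's : T' s = 1 - ∑ i, ω (x s) i * x' s i := rfl
    rw [hT's]
    ring
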